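/- arXiv:2108.13188 — 2 statements merged into one kernel-verified Lean document; each statement's English description precedes it below -/
import Mathlib

section
/- Under the hypotheses of the sine-iterate bounds (T, B, S₀ strongly continuous, ‖T(t)‖ ≤ M e^(ωt) t^(α−1)/Γ(α), ‖S₀(t)‖ ≤ M t e^(ωt), S_{n+1}(t)x = ∫₀ᵗ T(t−s)B(s)S_n(s)x ds, 1 < α ≤ 2, M ≥ 1, ω ≥ 0), for every t ≥ 0 and x ∈ X the tail series Σ_{n=1}^∞ S_n(t)x converges absolutely and ‖Σ_{n=1}^∞ S_n(t)x‖ ≤ M · e^(ωt) · t · [E_{α,2}(M·K_t·t^α) − 1] · ‖x‖, where K_t = sup_{0≤s≤t} ‖B(s)‖. Equivalently, ‖S_α(t; A+B) − S_α(t; A)‖ ≤ M e^(ωt) t [E_{α,2}(M K_t t^α) − 1]. -/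
/-!
By induction on `n`, `‖S n u x‖ ≤ M (M K)ⁿ ‖x‖ e^{ωu} u^{nα+1} / Γ(nα+2)` on `[0, t]`: the
exponentials combine as `e^{ω(u-s)} e^{ωs} = e^{ωu}`, and the remaining convolution of
Riemann–Liouville kernels `(u-s)^{α-1}/Γ(α) * s^{β-1}/Γ(β)` integrates to `u^{α+β-1}/Γ(α+β)`
by the Beta integral. Since `u^{nα+1} = u (u^α)ⁿ`, the `n`-th bound is `M e^{ωt} t ‖x‖` times the
`n`-th term of the series of `E_{α,2}(M K t^α)`, whose tail is `E_{α,2}(M K t^α) - 1`. The constant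
`K` is finite by the uniform boundedness principle.
-/

open MeasureTheory Set Real

theorem integral_rpow_mul_one_sub_rpow {a b : ℝ} (ha : 0 < a) (hb : 0 < b) :
    ∫ x in (0:ℝ)..1, x ^ (a - 1) * (1 - x) ^ (b - 1) = Gamma a * Gamma b / Gamma (a + b) := by
  apply Complex.ofReal_injective
  rw [← intervalIntegral.integral_ofReal]
  convert Complex.betaIntegral_eq_Gamma_mul_div a b (by simpa) (by simpa) using 1
  · refine intervalIntegral.integral_congr fun x hx => ?_
    rw [uIcc_of_le zero_le_one] at hx
    push_cast [Complex.ofReal_cpow hx.1, Complex.ofReal_cpow (sub_nonneg.2 hx.2)]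
    rfl
  · push_cast [← Complex.Gamma_ofReal]
    rfl

theorem integral_rpow_div_Gamma_mul_rpow_div_Gamma {a b u : ℝ} (ha : 0 < a) (hb : 0 < b)
    (hu : 0 < u) :
    ∫ s in (0:ℝ)..u, (u - s) ^ (a - 1) / Gamma a * (s ^ (b - 1) / Gamma b) =
      u ^ (a + b - 1) / Gamma (a + b) := by
  have hscale : ∀ y ∈ uIcc (0:ℝ) 1,
      (u - u * y) ^ (a - 1) / Gamma a * ((u * y) ^ (b - 1) / Gamma b) =
        u ^ (a + b - 2) / (Gamma a * Gamma b) * (y ^ (b - 1) * (1 - y) ^ (a - 1)) := by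
    intro y hy
    rw [uIcc_of_le zero_le_one] at hy
    rw [show u - u * y = u * (1 - y) by ring, mul_rpow hu.le (sub_nonneg.2 hy.2),
      mul_rpow hu.le hy.1, show a + b - 2 = (a - 1) + (b - 1) by ring, rpow_add hu]
    ring
  have hsub := intervalIntegral.smul_integral_comp_mul_left (a := 0) (b := 1)
    (fun s => (u - s) ^ (a - 1) / Gamma a * (s ^ (b - 1) / Gamma b)) u
  rw [mul_zero, mul_one] at hsub
  rw [← hsub, smul_eq_mul, intervalIntegral.integral_congr hscale,
    intervalIntegral.integral_const_mul, integral_rpow_mul_one_sub_rpow hb ha, add_comm b a,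
    show a + b - 1 = 1 + (a + b - 2) by ring, rpow_add hu, rpow_one]
  have hΓa := (Gamma_pos_of_pos ha).ne'
  have hΓb := (Gamma_pos_of_pos hb).ne'
  field_simp

theorem norm_integral_comp_apply_le {E F G : Type*} [NormedAddCommGroup E] [NormedSpace ℝ E]
    [NormedAddCommGroup F] [NormedSpace ℝ F] [NormedAddCommGroup G] [NormedSpace ℝ G]
    {T : ℝ → F →L[ℝ] G} {B : ℝ → E →L[ℝ] F} {f : ℝ → E} {α β M K C ω u : ℝ}
    (hα : 1 ≤ α) (hβ : 1 ≤ β) (hu : 0 < u)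
    (hT : ∀ τ ∈ Icc 0 u, ‖T τ‖ ≤ M * exp (ω * τ) * τ ^ (α - 1) / Gamma α)
    (hB : ∀ s ∈ Icc 0 u, ‖B s‖ ≤ K)
    (hf : ∀ s ∈ Icc 0 u, ‖f s‖ ≤ C * exp (ω * s) * s ^ (β - 1) / Gamma β) :
    ‖∫ s in (0:ℝ)..u, T (u - s) (B s (f s))‖ ≤
      M * K * C * exp (ω * u) * u ^ (α + β - 1) / Gamma (α + β) := by
  have hK : 0 ≤ K := (norm_nonneg _).trans (hB 0 (left_mem_Icc.2 hu.le))
  have hpointwise : ∀ s ∈ Ioc 0 u, ‖T (u - s) (B s (f s))‖ ≤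
      M * K * C * exp (ω * u) * ((u - s) ^ (α - 1) / Gamma α * (s ^ (β - 1) / Gamma β)) := by
    intro s ⟨hs0, hsu⟩
    have hTs := hT (u - s) ⟨sub_nonneg.2 hsu, by linarith⟩
    have hBf : ‖B s (f s)‖ ≤ K * (C * exp (ω * s) * s ^ (β - 1) / Gamma β) :=
      ((B s).le_opNorm _).trans (mul_le_mul (hB s ⟨hs0.le, hsu⟩) (hf s ⟨hs0.le, hsu⟩)
        (norm_nonneg _) hK)
    calc ‖T (u - s) (B s (f s))‖ ≤ ‖T (u - s)‖ * ‖B s (f s)‖ := (T (u - s)).le_opNorm _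
      _ ≤ M * exp (ω * (u - s)) * (u - s) ^ (α - 1) / Gamma α *
            (K * (C * exp (ω * s) * s ^ (β - 1) / Gamma β)) :=
          mul_le_mul hTs hBf (norm_nonneg _) ((norm_nonneg _).trans hTs)
      _ = _ := by
          rw [show ω * u = ω * (u - s) + ω * s by ring, exp_add]
          ring
  have hcont : Continuous fun s : ℝ => (u - s) ^ (α - 1) / Gamma α * (s ^ (β - 1) / Gamma β) :=
    (((continuous_rpow_const (by linarith)).comp (continuous_sub_left u)).div_const _).mul
      ((continuous_rpow_const (by linarith)).div_const _)
  calc ‖∫ s in (0:ℝ)..u, T (u - s) (B s (f s))‖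
      ≤ ∫ s in (0:ℝ)..u, M * K * C * exp (ω * u) *
          ((u - s) ^ (α - 1) / Gamma α * (s ^ (β - 1) / Gamma β)) :=
        intervalIntegral.norm_integral_le_of_norm_le hu.le (ae_of_all _ hpointwise)
          ((hcont.intervalIntegrable 0 u).const_mul _)
    _ = M * K * C * exp (ω * u) * u ^ (α + β - 1) / Gamma (α + β) := by
        rw [intervalIntegral.integral_const_mul,
          integral_rpow_div_Gamma_mul_rpow_div_Gamma (by linarith) (by linarith) hu, mul_div_assoc]

theorem norm_volterra_iterate_apply_le {E : Type*} [NormedAddCommGroup E] [NormedSpace ℝ E]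
    {T B : ℝ → E →L[ℝ] E} {S : ℕ → ℝ → E →L[ℝ] E} {α M K ω t : ℝ} (hα : 1 ≤ α)
    (hT : ∀ τ ∈ Icc 0 t, ‖T τ‖ ≤ M * exp (ω * τ) * τ ^ (α - 1) / Gamma α)
    (hB : ∀ s ∈ Icc 0 t, ‖B s‖ ≤ K)
    (hS : ∀ s ∈ Icc 0 t, ‖S 0 s‖ ≤ M * s * exp (ω * s))
    (hrec : ∀ n u x, S (n + 1) u x = ∫ s in (0:ℝ)..u, T (u - s) (B s (S n s x)))
    (x : E) (n : ℕ) :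
    ∀ u ∈ Icc 0 t, ‖S n u x‖ ≤
      M * (M * K) ^ n * ‖x‖ * exp (ω * u) * u ^ ((n : ℝ) * α + 1) / Gamma ((n : ℝ) * α + 2) := by
  induction n with
  | zero =>
    intro u hu
    calc ‖S 0 u x‖ ≤ ‖S 0 u‖ * ‖x‖ := (S 0 u).le_opNorm x
      _ ≤ M * u * exp (ω * u) * ‖x‖ := mul_le_mul_of_nonneg_right (hS u hu) (norm_nonneg x)
      _ = _ := by norm_num [Gamma_two]; ring
  | succ n ih =>
    rintro u ⟨hu0, hut⟩
    have hsub : Icc 0 u ⊆ Icc 0 t := Icc_subset_Icc_right hut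
    rcases hu0.eq_or_lt with rfl | hu
    · rw [hrec, intervalIntegral.integral_same, norm_zero, zero_rpow (by positivity)]
      simp
    have hf : ∀ s ∈ Icc 0 u, ‖S n s x‖ ≤ M * (M * K) ^ n * ‖x‖ * exp (ω * s) *
        s ^ ((n : ℝ) * α + 2 - 1) / Gamma ((n : ℝ) * α + 2) := by
      intro s hs
      rw [add_sub_assoc, show (2:ℝ) - 1 = 1 by norm_num]
      exact ih s (hsub hs)
    rw [hrec]
    refine (norm_integral_comp_apply_le hα (by nlinarith) hu (fun τ hτ => hT τ (hsub hτ))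
      (fun s hs => hB s (hsub hs)) hf).trans_eq ?_
    rw [show α + ((n : ℝ) * α + 2) - 1 = ((n + 1 : ℕ) : ℝ) * α + 1 by push_cast; ring,
      show α + ((n : ℝ) * α + 2) = ((n + 1 : ℕ) : ℝ) * α + 2 by push_cast; ring]
    ring

theorem summable_pow_div_Gamma_mul_add {α β : ℝ} (hα : 1 ≤ α) (hβ : 2 ≤ β) (z : ℝ) :
    Summable fun k : ℕ => z ^ k / Gamma (k * α + β) := by
  refine Summable.of_norm_bounded (Real.summable_pow_div_factorial |z|) fun k => ?_
  have hk : (0:ℝ) ≤ k := k.cast_nonneg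
  have hfact : (k.factorial : ℝ) ≤ Gamma (k * α + β) :=
    calc (k.factorial : ℝ) ≤ (k + 1).factorial := by exact_mod_cast Nat.factorial_le k.le_succ
      _ = Gamma ((k : ℝ) + 2) := by
        rw [show (k : ℝ) + 2 = ((k + 1 : ℕ) : ℝ) + 1 by push_cast; ring, Gamma_nat_eq_factorial]
      _ ≤ Gamma (k * α + β) := Gamma_strictMonoOn_Ici.monotoneOn (by simp)
          (by simp only [mem_Ici]; nlinarith) (by nlinarith)
  rw [norm_div, norm_pow, norm_eq_abs, norm_of_nonneg (Gamma_pos_of_pos (by positivity)).le]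
  exact div_le_div_of_nonneg_left (by positivity) (by positivity) hfact

theorem summable_norm_and_norm_tsum_le_of_norm_le_mul_succ {E : Type*} [NormedAddCommGroup E]
    {f : ℕ → E} {a : ℕ → ℝ} {c : ℝ} (ha : Summable a) (hf : ∀ n, ‖f n‖ ≤ c * a (n + 1)) :
    Summable (fun n => ‖f n‖) ∧ ‖∑' n, f n‖ ≤ c * (∑' k, a k - a 0) := by
  have ha' : Summable fun n => c * a (n + 1) := ((summable_nat_add_iff 1).2 ha).mul_left c
  have hsum : Summable (fun n => ‖f n‖) := ha'.of_nonneg_of_le (fun _ => norm_nonneg _) hf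
  refine ⟨hsum, ?_⟩
  calc ‖∑' n, f n‖ ≤ ∑' n, ‖f n‖ := norm_tsum_le_tsum_norm hsum
    _ ≤ ∑' n, c * a (n + 1) := hsum.tsum_le_tsum hf ha'
    _ = c * (∑' k, a k - a 0) := by rw [tsum_mul_left, ha.tsum_eq_zero_add, add_sub_cancel_left]

theorem IsCompact.bddAbove_image_norm_of_continuousOn_apply {𝕜 α E F : Type*}
    [NontriviallyNormedField 𝕜] [NormedAddCommGroup E] [NormedSpace 𝕜 E] [CompleteSpace E]
    [NormedAddCommGroup F] [NormedSpace 𝕜 F] [TopologicalSpace α] {s : Set α} (hs : IsCompact s) {B : α → E →L[𝕜] F}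
    (hB : ∀ x, ContinuousOn (fun a => B a x) s) : BddAbove ((fun a => ‖B a‖) '' s) := by
  obtain ⟨C, hC⟩ := banach_steinhaus (g := fun a : s => B a) fun x => by
    obtain ⟨C, hC⟩ := hs.exists_bound_of_continuousOn (hB x)
    exact ⟨C, fun a => hC a a.2⟩
  exact ⟨C, by rintro _ ⟨a, ha, rfl⟩; exact hC ⟨a, ha⟩⟩

theorem rpow_natCast_mul_add_one {t α : ℝ} (ht : 0 ≤ t) (hα : 0 ≤ α) (n : ℕ) :
    t ^ ((n : ℝ) * α + 1) = t * (t ^ α) ^ n := by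
  rw [rpow_add' ht (by positivity), rpow_one, mul_comm (n : ℝ), rpow_mul_natCast ht, mul_comm]

theorem perturbed_sine_difference_bound_general {X : Type*} [NormedAddCommGroup X]
    [NormedSpace ℝ X] [CompleteSpace X]
    (α M ω : ℝ) (hα1 : 1 < α)
    (T B : ℝ → X →L[ℝ] X) (S : ℕ → ℝ → X →L[ℝ] X)
    (hBcont : ∀ x : X, ContinuousOn (fun t => B t x) (Set.Ici 0))
    (hTbd : ∀ t : ℝ, 0 ≤ t → ‖T t‖ ≤ M * Real.exp (ω * t) * t ^ (α - 1) / Real.Gamma α)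
    (hS0bd : ∀ t : ℝ, 0 ≤ t → ‖S 0 t‖ ≤ M * t * Real.exp (ω * t))
    (hrec : ∀ (n : ℕ) (t : ℝ) (x : X),
      S (n + 1) t x = ∫ s in (0:ℝ)..t, T (t - s) (B s (S n s x)))
    (t : ℝ) (ht : 0 ≤ t) (x : X) :
    Summable (fun n : ℕ => ‖S (n + 1) t x‖) ∧
    ‖∑' n : ℕ, S (n + 1) t x‖ ≤ M * Real.exp (ω * t) * t *
      ((∑' k : ℕ, (M * (sSup ((fun s => ‖B s‖) '' Set.Icc 0 t)) * t ^ α) ^ k /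
        Real.Gamma ((k : ℝ) * α + 2)) - 1) * ‖x‖ := by
  set K := sSup ((fun s => ‖B s‖) '' Icc 0 t)
  have hbdd : BddAbove ((fun s => ‖B s‖) '' Icc 0 t) :=
    isCompact_Icc.bddAbove_image_norm_of_continuousOn_apply fun y =>
      (hBcont y).mono Icc_subset_Ici_self
  have hK : ∀ s ∈ Icc 0 t, ‖B s‖ ≤ K := fun s hs => le_csSup hbdd (mem_image_of_mem _ hs)
  have hterm : ∀ n : ℕ, ‖S (n + 1) t x‖ ≤ M * exp (ω * t) * t * ‖x‖ *
      ((M * K * t ^ α) ^ (n + 1) / Gamma (((n + 1 : ℕ) : ℝ) * α + 2)) := fun n => by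
    have h := norm_volterra_iterate_apply_le hα1.le (fun τ hτ => hTbd τ hτ.1) hK
      (fun s hs => hS0bd s hs.1) hrec x (n + 1) t ⟨ht, le_rfl⟩
    rw [rpow_natCast_mul_add_one ht (by linarith)] at h
    exact h.trans_eq (by ring)
  obtain ⟨hsum, hle⟩ := summable_norm_and_norm_tsum_le_of_norm_le_mul_succ
    (summable_pow_div_Gamma_mul_add hα1.le le_rfl (M * K * t ^ α)) hterm
  refine ⟨hsum, hle.trans_eq ?_⟩
  simp only [pow_zero, CharP.cast_eq_zero, zero_mul, zero_add, Gamma_two, div_one]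
  ring

/-- The tail series `Σ_{n≥1} S_n(t)x` converges absolutely and
`‖S_α(t;A+B)x − S_α(t;A)x‖ ≤ M e^{ωt} t [E_{α,2}(M K_t t^α) − 1] ‖x‖`. -/
theorem perturbed_sine_difference_bound {X : Type*} [NormedAddCommGroup X]
    [NormedSpace ℝ X] [CompleteSpace X]
    (α M ω : ℝ) (hα1 : 1 < α) (hα2 : α ≤ 2) (hM : 1 ≤ M) (hω : 0 ≤ ω)
    (T B : ℝ → X →L[ℝ] X) (S : ℕ → ℝ → X →L[ℝ] X)
    (hTcont : ∀ x : X, ContinuousOn (fun t => T t x) (Set.Ici 0))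
    (hBcont : ∀ x : X, ContinuousOn (fun t => B t x) (Set.Ici 0))
    (hS0cont : ∀ x : X, ContinuousOn (fun t => S 0 t x) (Set.Ici 0))
    (hTbd : ∀ t : ℝ, 0 ≤ t → ‖T t‖ ≤ M * Real.exp (ω * t) * t ^ (α - 1) / Real.Gamma α)
    (hS0bd : ∀ t : ℝ, 0 ≤ t → ‖S 0 t‖ ≤ M * t * Real.exp (ω * t))
    (hrec : ∀ (n : ℕ) (t : ℝ) (x : X),
      S (n + 1) t x = ∫ s in (0:ℝ)..t, T (t - s) (B s (S n s x)))
    (t : ℝ) (ht : 0 ≤ t) (x : X) :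
    Summable (fun n : ℕ => ‖S (n + 1) t x‖) ∧
    ‖∑' n : ℕ, S (n + 1) t x‖ ≤ M * Real.exp (ω * t) * t *
      ((∑' k : ℕ, (M * (sSup ((fun s => ‖B s‖) '' Set.Icc 0 t)) * t ^ α) ^ k /
        Real.Gamma ((k : ℝ) * α + 2)) - 1) * ‖x‖ :=
  perturbed_sine_difference_bound_general α M ω hα1 T B S hBcont hTbd hS0bd hrec t ht x
end

section
/- Let X be a real Banach space, 1 < α ≤ 2, M ≥ 1, ω ≥ 0, b ≥ 0. Let C : [0,∞) → L(X) be strongly continuous with ‖C(s)‖ ≤ M·e^(ωs)·E_α(b·s^α) for all s ≥ 0, and define T(t)x = ∫₀ᵗ ((t−s)^(α−2)/Γ(α−1)) C(s)x ds. Then ‖T(t)‖ ≤ M·e^(ωt)·t^(α−1)·E_{α,α}(b·t^α) for all t > 0. -/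
/-!
Bound the integrand pointwise by `M e^{ωt} ‖x‖ (t-s)^{α-2}/Γ(α-1) · E_α(b s^α)` and integrate
the Mittag-Leffler series term by term: each term is a Beta integral,
`∫₀ᵗ (t-s)^{α-2} s^{kα} ds = t^{kα+α-1} Γ(kα+1) Γ(α-1) / Γ(kα+α)`,
which turns `E_α(b s^α)` into `Γ(α-1) t^{α-1} E_{α,α}(b t^α)`. Since all terms are nonnegative,
the computation is done with lower Lebesgue integrals, where termwise integration needs no
integrability hypotheses.
-/

open MeasureTheory Set Filter

theorem integral_rpow_mul_sub_rpow {u v t : ℝ} (hu : 0 < u) (hv : 0 < v) (ht : 0 < t) :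
    ∫ s in (0:ℝ)..t, s ^ (u - 1) * (t - s) ^ (v - 1) =
      t ^ (u + v - 1) * (Real.Gamma u * Real.Gamma v / Real.Gamma (u + v)) := by
  have hB : Complex.betaIntegral u v =
      ((Real.Gamma u * Real.Gamma v / Real.Gamma (u + v) : ℝ) : ℂ) := by
    have hΓ : Complex.Gamma (u + v) ≠ 0 := by
      rw [← Complex.ofReal_add, Complex.Gamma_ofReal]
      exact_mod_cast (Real.Gamma_pos_of_pos (add_pos hu hv)).ne'
    push_cast
    rw [← Complex.Gamma_ofReal, ← Complex.Gamma_ofReal, ← Complex.Gamma_ofReal,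
      Complex.ofReal_add, Complex.Gamma_mul_Gamma_eq_betaIntegral (by simpa using hu)
      (by simpa using hv), mul_div_cancel_left₀ _ hΓ]
  have h := Complex.betaIntegral_scaled (u : ℂ) (v : ℂ) ht
  have htpow : (t : ℂ) ^ ((u : ℂ) + v - 1) = ((t ^ (u + v - 1) : ℝ) : ℂ) := by
    rw [Complex.ofReal_cpow ht.le]
    push_cast
    rfl
  rw [hB, htpow, ← Complex.ofReal_mul] at h
  rw [← Complex.ofReal_inj, ← h, ← intervalIntegral.integral_ofReal]
  refine intervalIntegral.integral_congr fun s hs => ?_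
  rw [uIcc_of_le ht.le] at hs
  simp only [Complex.ofReal_mul]
  rw [Complex.ofReal_cpow hs.1, Complex.ofReal_cpow (sub_nonneg.2 hs.2)]
  push_cast
  rfl

theorem lintegral_rpow_mul_sub_rpow {u v t : ℝ} (hu : 0 < u) (hv : 0 < v) (ht : 0 < t) :
    ∫⁻ s in Ioc 0 t, ENNReal.ofReal (s ^ (u - 1) * (t - s) ^ (v - 1)) =
      ENNReal.ofReal (t ^ (u + v - 1) * (Real.Gamma u * Real.Gamma v / Real.Gamma (u + v))) := by
  have hpos : 0 < t ^ (u + v - 1) * (Real.Gamma u * Real.Gamma v / Real.Gamma (u + v)) := by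
    have := Real.Gamma_pos_of_pos hu
    have := Real.Gamma_pos_of_pos hv
    have := Real.Gamma_pos_of_pos (add_pos hu hv)
    positivity
  have hint := integral_rpow_mul_sub_rpow hu hv ht
  rw [intervalIntegral.integral_of_le ht.le] at hint
  -- integrable, since its Bochner integral is nonzero
  rw [← hint, ofReal_integral_eq_lintegral_ofReal (.of_integral_ne_zero (hint ▸ hpos.ne'))]
  filter_upwards [ae_restrict_mem measurableSet_Ioc] with s hs
  exact mul_nonneg (Real.rpow_nonneg hs.1.le _) (Real.rpow_nonneg (sub_nonneg.2 hs.2) _)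

/-- The Mittag-Leffler function `E_{a,β}`; the one-parameter `E_a` is `E_{a,1}`. -/
noncomputable def mittagLeffler (a β z : ℝ) : ℝ :=
  ∑' k : ℕ, z ^ k / Real.Gamma ((k : ℝ) * a + β)

theorem Real.Gamma_add_one_le_Gamma_add {x a : ℝ} (hx : 1 ≤ x) (ha : 1 ≤ a) :
    Real.Gamma (x + 1) ≤ Real.Gamma (x + a) := by
  rcases ha.eq_or_lt with rfl | ha
  · rfl
  · exact (Real.Gamma_strictMonoOn_Ici (by simp; linarith) (by simp; linarith)
      (by linarith)).le

theorem mittagLeffler_summable {a β : ℝ} (ha : 1 ≤ a) (hβ : 0 < β) (z : ℝ) :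
    Summable fun k : ℕ => z ^ k / Real.Gamma ((k : ℝ) * a + β) := by
  refine summable_of_ratio_norm_eventually_le (r := 1 / 2) (by norm_num) ?_
  filter_upwards [eventually_ge_atTop ⌈max 1 (2 * |z|)⌉₊] with k hk
  set x := (k : ℝ) * a + β
  have hk' : max 1 (2 * |z|) ≤ (k : ℝ) := (Nat.le_ceil _).trans (by exact_mod_cast hk)
  have hkx : (k : ℝ) ≤ x := by nlinarith [le_max_left 1 (2 * |z|)]
  have hx1 : 1 ≤ x := (le_max_left _ _).trans (hk'.trans hkx)
  have hzx : 2 * |z| ≤ x := (le_max_right _ _).trans (hk'.trans hkx)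
  have hΓx : 0 < Real.Gamma x := Real.Gamma_pos_of_pos (by linarith)
  have hΓ : x * Real.Gamma x ≤ Real.Gamma (x + a) :=
    Real.Gamma_add_one (by positivity : x ≠ 0) ▸ Real.Gamma_add_one_le_Gamma_add hx1 ha
  have hsucc : ((k + 1 : ℕ) : ℝ) * a + β = x + a := by push_cast; ring
  have hΓxa : 0 < Real.Gamma (x + a) := (mul_pos (by linarith) hΓx).trans_le hΓ
  rw [hsucc]
  simp only [norm_div, norm_pow, Real.norm_eq_abs, abs_of_pos hΓx, abs_of_pos hΓxa]
  calc |z| ^ (k + 1) / Real.Gamma (x + a)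
      ≤ |z| ^ (k + 1) / (x * Real.Gamma x) := by gcongr
    _ = |z| / x * (|z| ^ k / Real.Gamma x) := by rw [pow_succ]; field_simp
    _ ≤ 1 / 2 * (|z| ^ k / Real.Gamma x) := by
      refine mul_le_mul_of_nonneg_right ?_ (by positivity)
      rw [div_le_iff₀ (by linarith)]
      linarith

theorem mittagLeffler_nonneg {a β z : ℝ} (ha : 0 ≤ a) (hβ : 0 < β) (hz : 0 ≤ z) :
    0 ≤ mittagLeffler a β z :=
  tsum_nonneg fun k => div_nonneg (pow_nonneg hz k)
    (Real.Gamma_pos_of_pos (by positivity)).le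

theorem lintegral_rpow_sub_mul_mittagLeffler {a v b t : ℝ} (ha : 1 ≤ a) (hv : 0 < v)
    (hb : 0 ≤ b) (ht : 0 < t) :
    ∫⁻ s in Ioc 0 t, ENNReal.ofReal ((t - s) ^ (v - 1) * mittagLeffler a 1 (b * s ^ a)) =
      ENNReal.ofReal (Real.Gamma v * t ^ v * mittagLeffler a (v + 1) (b * t ^ a)) := by
  have hΓ : ∀ β > 0, ∀ k : ℕ, 0 < Real.Gamma ((k : ℝ) * a + β) := fun β hβ k =>
    Real.Gamma_pos_of_pos (by positivity)
  have hpow : ∀ s, 0 ≤ s → ∀ k : ℕ, (b * s ^ a) ^ k = b ^ k * s ^ ((k : ℝ) * a + 1 - 1) := by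
    intro s hs k
    rw [add_sub_cancel_right, mul_pow, ← Real.rpow_natCast (s ^ a), ← Real.rpow_mul hs, mul_comm a]
  have hexpand : ∀ s ∈ Ioc 0 t,
      ENNReal.ofReal ((t - s) ^ (v - 1) * mittagLeffler a 1 (b * s ^ a)) =
        ∑' k : ℕ, ENNReal.ofReal (b ^ k / Real.Gamma ((k : ℝ) * a + 1)) *
          ENNReal.ofReal (s ^ ((k : ℝ) * a + 1 - 1) * (t - s) ^ (v - 1)) := by
    intro s hs
    have hts : 0 ≤ (t - s) ^ (v - 1) := Real.rpow_nonneg (sub_nonneg.2 hs.2) _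
    rw [mittagLeffler, ← tsum_mul_left, ENNReal.ofReal_tsum_of_nonneg
      (fun k => mul_nonneg hts (div_nonneg
        (pow_nonneg (mul_nonneg hb (Real.rpow_nonneg hs.1.le a)) k) (hΓ 1 one_pos k).le))
      ((mittagLeffler_summable ha one_pos _).mul_left _)]
    refine tsum_congr fun k => ?_
    rw [← ENNReal.ofReal_mul (div_nonneg (pow_nonneg hb k) (hΓ 1 one_pos k).le),
      hpow s hs.1.le k]
    ring_nf
  have hterm : ∀ k : ℕ, b ^ k / Real.Gamma ((k : ℝ) * a + 1) *
      (t ^ ((k : ℝ) * a + 1 + v - 1) *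
        (Real.Gamma ((k : ℝ) * a + 1) * Real.Gamma v / Real.Gamma ((k : ℝ) * a + 1 + v))) =
      Real.Gamma v * t ^ v * ((b * t ^ a) ^ k / Real.Gamma ((k : ℝ) * a + (v + 1))) := by
    intro k
    have := (hΓ 1 one_pos k).ne'
    rw [hpow t ht.le, add_sub_cancel_right, show (k : ℝ) * a + 1 + v - 1 = k * a + v by ring,
      show (k : ℝ) * a + 1 + v = k * a + (v + 1) by ring, Real.rpow_add ht]
    field_simp
  rw [setLIntegral_congr_fun measurableSet_Ioc hexpand, lintegral_tsum fun k => by fun_prop]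
  simp_rw [lintegral_const_mul' _ _ ENNReal.ofReal_ne_top]
  rw [tsum_congr fun k => by
      rw [lintegral_rpow_mul_sub_rpow (by positivity) hv ht,
        ← ENNReal.ofReal_mul (div_nonneg (pow_nonneg hb k) (hΓ 1 one_pos k).le), hterm k],
    ← ENNReal.ofReal_tsum_of_nonneg
      (fun k => by have := (hΓ (v + 1) (by positivity) k); positivity)
      ((mittagLeffler_summable ha (by positivity) _).mul_left _),
    tsum_mul_left, mittagLeffler]

theorem norm_intervalIntegral_le_of_lintegral_le {E : Type*} [NormedAddCommGroup E]
    [NormedSpace ℝ E] {f : ℝ → E} {g : ℝ → ℝ} {t c : ℝ} (ht : 0 ≤ t) (hc : 0 ≤ c)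
    (hfg : ∀ s ∈ Ioc 0 t, ‖f s‖ ≤ g s)
    (hg : ∫⁻ s in Ioc 0 t, ENNReal.ofReal (g s) ≤ ENNReal.ofReal c) :
    ‖∫ s in 0..t, f s‖ ≤ c := by
  rw [intervalIntegral.integral_of_le ht]
  calc ‖∫ s in Ioc 0 t, f s‖
      ≤ (∫⁻ s in Ioc 0 t, ENNReal.ofReal ‖f s‖).toReal := norm_integral_le_lintegral_norm f
    _ ≤ (ENNReal.ofReal c).toReal := ENNReal.toReal_mono ENNReal.ofReal_ne_top
        ((setLIntegral_mono' measurableSet_Ioc fun s hs =>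
          ENNReal.ofReal_le_ofReal (hfg s hs)).trans hg)
    _ = c := ENNReal.toReal_ofReal hc

theorem norm_integral_rpow_sub_smul_le_mittagLeffler {E : Type*} [NormedAddCommGroup E]
    [NormedSpace ℝ E] {f : ℝ → E} {a v b t K : ℝ} (ha : 1 ≤ a) (hv : 0 < v) (hb : 0 ≤ b)
    (ht : 0 < t) (hK : 0 ≤ K) (hf : ∀ s ∈ Ioc 0 t, ‖f s‖ ≤ K * mittagLeffler a 1 (b * s ^ a)) :
    ‖∫ s in 0..t, ((t - s) ^ (v - 1) / Real.Gamma v) • f s‖ ≤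
      K * t ^ v * mittagLeffler a (v + 1) (b * t ^ a) := by
  have hΓ : 0 < Real.Gamma v := Real.Gamma_pos_of_pos hv
  have hKΓ : 0 ≤ K / Real.Gamma v := div_nonneg hK hΓ.le
  refine norm_intervalIntegral_le_of_lintegral_le
    (g := fun s => K / Real.Gamma v * ((t - s) ^ (v - 1) * mittagLeffler a 1 (b * s ^ a)))
    ht.le (mul_nonneg (by positivity) (mittagLeffler_nonneg (by linarith) (by linarith)
      (by positivity))) (fun s hs => ?_) ?_
  · have hcoef : 0 ≤ (t - s) ^ (v - 1) / Real.Gamma v :=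
      div_nonneg (Real.rpow_nonneg (sub_nonneg.2 hs.2) _) hΓ.le
    calc ‖((t - s) ^ (v - 1) / Real.Gamma v) • f s‖
        ≤ (t - s) ^ (v - 1) / Real.Gamma v * (K * mittagLeffler a 1 (b * s ^ a)) := by
          rw [norm_smul, Real.norm_of_nonneg hcoef]
          exact mul_le_mul_of_nonneg_left (hf s hs) hcoef
      _ = _ := by ring
  · simp_rw [ENNReal.ofReal_mul hKΓ]
    rw [lintegral_const_mul' _ _ ENNReal.ofReal_ne_top,
      lintegral_rpow_sub_mul_mittagLeffler ha hv hb ht, ← ENNReal.ofReal_mul hKΓ]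
    refine ENNReal.ofReal_le_ofReal (le_of_eq ?_)
    field_simp

theorem perturbed_riemannLiouville_bound_general {X : Type*} [NormedAddCommGroup X]
    [NormedSpace ℝ X]
    (α M ω b : ℝ) (hα1 : 1 < α) (hM : 1 ≤ M) (hω : 0 ≤ ω) (hb : 0 ≤ b)
    (C : ℝ → X →L[ℝ] X) (T : ℝ → X →L[ℝ] X)
    (hCbd : ∀ s : ℝ, 0 ≤ s →
      ‖C s‖ ≤ M * Real.exp (ω * s) * ∑' k : ℕ, (b * s ^ α) ^ k / Real.Gamma ((k : ℝ) * α + 1))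
    (hT : ∀ (t : ℝ) (x : X),
      T t x = ∫ s in (0:ℝ)..t, ((t - s) ^ (α - 2) / Real.Gamma (α - 1)) • C s x)
    (t : ℝ) (ht : 0 < t) :
    ‖T t‖ ≤ M * Real.exp (ω * t) * t ^ (α - 1) *
      ∑' k : ℕ, (b * t ^ α) ^ k / Real.Gamma ((k : ℝ) * α + α) := by
  have hC : ∀ s, 0 ≤ s → ‖C s‖ ≤ M * Real.exp (ω * s) * mittagLeffler α 1 (b * s ^ α) := hCbd
  have hM0 : 0 ≤ M := by linarith
  have hE : 0 ≤ mittagLeffler α α (b * t ^ α) :=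
    mittagLeffler_nonneg (by linarith) (by linarith) (by positivity)
  change ‖T t‖ ≤ M * Real.exp (ω * t) * t ^ (α - 1) * mittagLeffler α α (b * t ^ α)
  refine ContinuousLinearMap.opNorm_le_bound _ (mul_nonneg (by positivity) hE) fun x => ?_
  have hCx : ∀ s ∈ Ioc 0 t,
      ‖C s x‖ ≤ M * Real.exp (ω * t) * ‖x‖ * mittagLeffler α 1 (b * s ^ α) := fun s hs =>
    calc ‖C s x‖ ≤ ‖C s‖ * ‖x‖ := (C s).le_opNorm x
      _ ≤ M * Real.exp (ω * t) * mittagLeffler α 1 (b * s ^ α) * ‖x‖ := by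
        refine mul_le_mul_of_nonneg_right ((hC s hs.1.le).trans ?_) (norm_nonneg x)
        gcongr
        · exact mittagLeffler_nonneg (by linarith) one_pos
            (mul_nonneg hb (Real.rpow_nonneg hs.1.le α))
        · exact hs.2
      _ = _ := by ring
  have key := norm_integral_rpow_sub_smul_le_mittagLeffler (v := α - 1) hα1.le
    (by linarith) hb ht (by positivity) hCx
  rw [sub_add_cancel, show α - 1 - 1 = α - 2 by ring] at key
  rw [hT]
  linarith

/-- Estimate for the Riemann–Liouville family associated with the perturbed fractional
cosine family: if `‖C(s)‖ ≤ M e^{ωs} E_α(b s^α)` then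
`‖T(t)‖ ≤ M e^{ωt} t^{α−1} E_{α,α}(b t^α)`. -/
theorem perturbed_riemannLiouville_bound {X : Type*} [NormedAddCommGroup X]
    [NormedSpace ℝ X] [CompleteSpace X]
    (α M ω b : ℝ) (hα1 : 1 < α) (hα2 : α ≤ 2) (hM : 1 ≤ M) (hω : 0 ≤ ω) (hb : 0 ≤ b)
    (C : ℝ → X →L[ℝ] X) (T : ℝ → X →L[ℝ] X)
    (hCcont : ∀ x : X, ContinuousOn (fun t => C t x) (Set.Ici 0))
    (hCbd : ∀ s : ℝ, 0 ≤ s →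
      ‖C s‖ ≤ M * Real.exp (ω * s) * ∑' k : ℕ, (b * s ^ α) ^ k / Real.Gamma ((k : ℝ) * α + 1))
    (hT : ∀ (t : ℝ) (x : X),
      T t x = ∫ s in (0:ℝ)..t, ((t - s) ^ (α - 2) / Real.Gamma (α - 1)) • C s x)
    (t : ℝ) (ht : 0 < t) :
    ‖T t‖ ≤ M * Real.exp (ω * t) * t ^ (α - 1) *
      ∑' k : ℕ, (b * t ^ α) ^ k / Real.Gamma ((k : ℝ) * α + α) :=
  perturbed_riemannLiouville_bound_general α M ω b hα1 hM hω hb C T hCbd hT t ht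
end
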